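/- Strict monotonicity of the log-sum-exp correction: for two priors p, p' : Fin k → ℝ with p_i, p'_i > 0, if p_j/p'_j > p_i/p'_i for a fixed class j and all i ≠ j, then the bias-balanced softmax probability of class j under prior p is strictly greater than under prior p', for any logits η. -/
import Mathlib


/-- If the prior ratio of class j strictly dominates that of all other classes,
    the bias-balanced softmax probability of class j is strictly larger. -/
theorem bias_balanced_softmax_strict_mono (k : ℕ) (hk : 2 ≤ k) (η : Fin k → ℝ)
    (p p' : Fin k → ℝ) (hp : ∀ i, 0 < p i) (hp' : ∀ i, 0 < p' i) (j : Fin k)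
    (hratio : ∀ i, i ≠ j → p i / p' i < p j / p' j) :
    p' j * Real.exp (η j) / ∑ i, p' i * Real.exp (η i)
      < p j * Real.exp (η j) / ∑ i, p i * Real.exp (η i) := by
  have hpos : ∀ i : Fin k, 0 < p i * Real.exp (η i) := fun i =>
    mul_pos (hp i) (Real.exp_pos _)
  have hpos' : ∀ i : Fin k, 0 < p' i * Real.exp (η i) := fun i =>
    mul_pos (hp' i) (Real.exp_pos _)
  have : NeZero k := ⟨by omega⟩
  have hS : 0 < ∑ i, p i * Real.exp (η i) :=
    Finset.sum_pos (fun i _ => hpos i) Finset.univ_nonempty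
  have hS' : 0 < ∑ i, p' i * Real.exp (η i) :=
    Finset.sum_pos (fun i _ => hpos' i) Finset.univ_nonempty
  rw [div_lt_div_iff₀ hS' hS]
  rw [Finset.mul_sum, Finset.mul_sum]
  -- key termwise inequality: p' j * p i ≤ p j * p' i
  have key : ∀ i, i ≠ j → p' j * p i < p j * p' i := by
    intro i hi
    have h := hratio i hi
    rw [div_lt_div_iff₀ (hp' i) (hp' j)] at h
    nlinarith
  obtain ⟨i₀, hi₀⟩ := Fintype.exists_ne_of_one_lt_card (by simp; omega) j
  apply Finset.sum_lt_sum
  · intro i _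
    rcases eq_or_ne i j with rfl | hi
    · ring_nf; exact le_refl _
    · have := (key i hi).le
      have h2 := mul_le_mul_of_nonneg_right this
        (mul_nonneg (Real.exp_pos (η j)).le (Real.exp_pos (η i)).le)
      nlinarith [h2]
  · refine ⟨i₀, Finset.mem_univ _, ?_⟩
    have := key i₀ hi₀
    have h2 := mul_lt_mul_of_pos_right this
      (mul_pos (Real.exp_pos (η j)) (Real.exp_pos (η i₀)))
    nlinarith [h2]
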